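/- arXiv:2406.11150 — 3 statements merged into one kernel-verified Lean document; each statement's English description precedes it below -/
import Mathlib

section
/- Let γ > 1. The cubic equation λ(λ−1)(λ−2) − 12((2/(γ+1))λ + 2) = 0 has a unique real solution λ₀, and λ₀ satisfies 4 < λ₀. Moreover λ₀ is at most the unique real solution of λ(λ−1)(λ−2) − 12(λ+2) = 0. -/
-- negativity for l ≤ 4
lemma neg_le4 (c l : ℝ) (hc0 : 0 < c) (hc1 : c ≤ 1) (hl : l ≤ 4) :
    l * (l - 1) * (l - 2) - 12 * (c * l + 2) < 0 := by
  rcases le_or_gt l 0 with h0 | h0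
  · nlinarith [sq_nonneg (l + 1), sq_nonneg l, mul_nonneg (neg_nonneg.2 h0) (sub_nonneg.2 hc1), sq_nonneg (l+2)]
  · nlinarith [mul_nonneg (mul_nonneg hc0.le h0.le) (sub_nonneg.2 hl), mul_pos hc0 h0, sq_nonneg (2*l+1), mul_nonneg (sub_nonneg.2 hl) (sq_nonneg l)]

lemma root_gt4 (c l : ℝ) (hc0 : 0 < c) (hc1 : c ≤ 1)
    (h : l * (l - 1) * (l - 2) - 12 * (c * l + 2) = 0) : 4 < l := by
  by_contra h4
  push_neg at h4
  exact absurd h (ne_of_lt (neg_le4 c l hc0 hc1 h4))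

lemma mono_gt4 (c a b : ℝ) (hc1 : c ≤ 1) (ha : 4 < a) (hab : a < b) :
    a * (a - 1) * (a - 2) - 12 * (c * a + 2) < b * (b - 1) * (b - 2) - 12 * (c * b + 2) := by
  have hb : (4:ℝ) < b := ha.trans hab
  have key : 0 < a*a + a*b + b*b - 3*a - 3*b + 2 - 12*c := by
    nlinarith [mul_pos (sub_pos.2 ha) (sub_pos.2 hb)]
  nlinarith [mul_pos (sub_pos.2 hab) key]

lemma exists_root (c : ℝ) (hc0 : 0 < c) (hc1 : c ≤ 1) :
    ∃ l : ℝ, l * (l - 1) * (l - 2) - 12 * (c * l + 2) = 0 := by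
  have hcont : ContinuousOn (fun l : ℝ => l * (l - 1) * (l - 2) - 12 * (c * l + 2)) (Set.Icc 4 6) := by
    fun_prop
  have h := intermediate_value_Icc (by norm_num : (4:ℝ) ≤ 6) hcont
  have h0 : (0:ℝ) ∈ Set.Icc ((fun l : ℝ => l * (l - 1) * (l - 2) - 12 * (c * l + 2)) 4)
      ((fun l : ℝ => l * (l - 1) * (l - 2) - 12 * (c * l + 2)) 6) := by
    constructor <;> simp <;> nlinarith
  obtain ⟨l, _, hl⟩ := h h0
  exact ⟨l, hl⟩

lemma uniq_root (c a b : ℝ) (hc0 : 0 < c) (hc1 : c ≤ 1)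
    (ha : a * (a - 1) * (a - 2) - 12 * (c * a + 2) = 0)
    (hb : b * (b - 1) * (b - 2) - 12 * (c * b + 2) = 0) : a = b := by
  rcases lt_trichotomy a b with h | h | h
  · exact absurd (ha.trans hb.symm) (ne_of_lt (mono_gt4 c a b hc1 (root_gt4 c a hc0 hc1 ha) h))
  · exact h
  · exact absurd (hb.trans ha.symm) (ne_of_lt (mono_gt4 c b a hc1 (root_gt4 c b hc0 hc1 hb) h))

theorem stmt_4 (γ : ℝ) (hγ : 1 < γ) :
    (∃! l : ℝ, l * (l - 1) * (l - 2) - 12 * ((2 / (γ + 1)) * l + 2) = 0) ∧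
    (∀ l₀ l₁ : ℝ, l₀ * (l₀ - 1) * (l₀ - 2) - 12 * ((2 / (γ + 1)) * l₀ + 2) = 0 →
      l₁ * (l₁ - 1) * (l₁ - 2) - 12 * (l₁ + 2) = 0 → 4 < l₀ ∧ l₀ ≤ l₁) := by
  have hγ1 : (0:ℝ) < γ + 1 := by linarith
  set c : ℝ := 2 / (γ + 1) with hc
  have hc0 : 0 < c := div_pos (by norm_num) hγ1
  have hc1 : c < 1 := by rw [hc, div_lt_one hγ1]; linarith
  constructor
  · obtain ⟨l, hl⟩ := exists_root c hc0 hc1.le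
    exact ⟨l, hl, fun y hy => uniq_root c y l hc0 hc1.le hy hl⟩
  · intro l₀ l₁ h₀ h₁
    have h₁' : l₁ * (l₁ - 1) * (l₁ - 2) - 12 * ((1:ℝ) * l₁ + 2) = 0 := by linarith [h₁]; 
    have hl₀ : 4 < l₀ := root_gt4 c l₀ hc0 hc1.le h₀
    have hl₁ : 4 < l₁ := root_gt4 1 l₁ one_pos le_rfl h₁'
    refine ⟨hl₀, ?_⟩
    by_contra hle
    push_neg at hle
    have hm := mono_gt4 c l₁ l₀ hc1.le hl₁ hle
    rw [h₀] at hm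
    nlinarith [mul_pos (sub_pos.2 hc1) (by linarith : (0:ℝ) < l₁)]
end

section
/- Let γ > 1, R > 0, T∞ > 0, u∞ < 0 with m u∞² = γ R T∞ + 1. For all real φ, ψ, ζ, σ: (R T∞/2)|u∞| φ² − R T∞ φψ + (m/2)|u∞| ψ² − R ζψ + (R|u∞|/(2(γ−1)T∞)) ζ² + σψ + (|u∞|/2)σ² = (R T∞/2)|u∞|(φ − ψ/|u∞|)² + ((γ−1)R T∞/(2|u∞|))(ψ − |u∞| ζ/((γ−1)T∞))² + (|u∞|/2)(σ + ψ/|u∞|)². In particular the left-hand side is nonnegative. -/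
theorem stmt_12 (γ R T m u : ℝ) (hγ : 1 < γ) (hR : 0 < R) (hT : 0 < T)
    (hu : u < 0) (hBohm : m * u ^ 2 = γ * R * T + 1) :
    ∀ φ ψ ζ σ : ℝ,
      (R * T / 2) * |u| * φ ^ 2 - R * T * (φ * ψ) + (m / 2) * |u| * ψ ^ 2
          - R * (ζ * ψ) + (R * |u| / (2 * (γ - 1) * T)) * ζ ^ 2
          + σ * ψ + (|u| / 2) * σ ^ 2
        = (R * T / 2) * |u| * (φ - ψ / |u|) ^ 2
          + ((γ - 1) * R * T / (2 * |u|)) * (ψ - |u| * ζ / ((γ - 1) * T)) ^ 2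
          + (|u| / 2) * (σ + ψ / |u|) ^ 2 ∧
      0 ≤ (R * T / 2) * |u| * φ ^ 2 - R * T * (φ * ψ) + (m / 2) * |u| * ψ ^ 2
          - R * (ζ * ψ) + (R * |u| / (2 * (γ - 1) * T)) * ζ ^ 2
          + σ * ψ + (|u| / 2) * σ ^ 2 := by
  intro φ ψ ζ σ
  have habs : |u| = -u := abs_of_neg hu
  have hu0 : u ≠ 0 := ne_of_lt hu
  have hg : γ - 1 ≠ 0 := by nlinarith
  have hT0 : T ≠ 0 := ne_of_gt hT
  have key : (R * T / 2) * |u| * φ ^ 2 - R * T * (φ * ψ) + (m / 2) * |u| * ψ ^ 2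
          - R * (ζ * ψ) + (R * |u| / (2 * (γ - 1) * T)) * ζ ^ 2
          + σ * ψ + (|u| / 2) * σ ^ 2
        = (R * T / 2) * |u| * (φ - ψ / |u|) ^ 2
          + ((γ - 1) * R * T / (2 * |u|)) * (ψ - |u| * ζ / ((γ - 1) * T)) ^ 2
          + (|u| / 2) * (σ + ψ / |u|) ^ 2 := by
    rw [habs]
    have hm : m = (γ * R * T + 1) / u ^ 2 := by
      field_simp at hBohm ⊢; linarith
    rw [hm]
    have hnu : (-u) ≠ 0 := neg_ne_zero.mpr hu0
    field_simp [hnu]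
    ring
  refine ⟨key, ?_⟩
  rw [key]
  have h1 : 0 < |u| := abs_pos.mpr hu0
  have h2 : 0 < (γ - 1) * R * T / (2 * |u|) := div_pos (by nlinarith [mul_pos hR hT]) (by linarith [h1])
  have h3 : 0 ≤ R * T / 2 * |u| := by positivity
  nlinarith [sq_nonneg (φ - ψ / |u|), sq_nonneg (ψ - |u| * ζ / ((γ - 1) * T)), sq_nonneg (σ + ψ / |u|), mul_nonneg h3 (sq_nonneg (φ - ψ / |u|)), mul_nonneg h2.le (sq_nonneg (ψ - |u| * ζ / ((γ - 1) * T))), mul_nonneg (by positivity : (0:ℝ) ≤ |u|/2) (sq_nonneg (σ + ψ / |u|))]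
end

section
/- Let m > 0, γ > 1, R > 0, T∞ > 0, u∞ < 0 satisfy m u∞² ≥ γ R T∞ + 1 (Bohm criterion). Then the symmetric quadratic form A(φ, ψ, ζ) = (|u∞|/2) R T∞ φ² − R T∞ φψ + ((m u∞² − 1)/(2|u∞|)) ψ² + (R|u∞|/(2(γ−1)T∞)) ζ² − R ζψ is positive semidefinite; it is positive definite when m u∞² > γ R T∞ + 1. -/
theorem stmt_13 (m γ R T u : ℝ) (hm : 0 < m) (hγ : 1 < γ) (hR : 0 < R)
    (hT : 0 < T) (hu : u < 0) (hBohm : m * u ^ 2 ≥ γ * R * T + 1) :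
    (∀ φ ψ ζ : ℝ,
      0 ≤ (|u| / 2) * R * T * φ ^ 2 - R * T * (φ * ψ)
          + ((m * u ^ 2 - 1) / (2 * |u|)) * ψ ^ 2
          + (R * |u| / (2 * (γ - 1) * T)) * ζ ^ 2 - R * (ζ * ψ)) ∧
    (m * u ^ 2 > γ * R * T + 1 →
      ∀ φ ψ ζ : ℝ, ¬(φ = 0 ∧ ψ = 0 ∧ ζ = 0) →
        0 < (|u| / 2) * R * T * φ ^ 2 - R * T * (φ * ψ)
          + ((m * u ^ 2 - 1) / (2 * |u|)) * ψ ^ 2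
          + (R * |u| / (2 * (γ - 1) * T)) * ζ ^ 2 - R * (ζ * ψ)) := by
  have habs : |u| = -u := abs_of_neg hu
  set v : ℝ := -u with hv
  have hv0 : 0 < v := by simp [hv]; linarith
  have hvne : v ≠ 0 := ne_of_gt hv0
  have hγ1 : (0:ℝ) < γ - 1 := by linarith
  have hTne : T ≠ 0 := ne_of_gt hT
  have ha : 0 < v * R * T / 2 := by positivity
  have hb : 0 < R * v / (2 * (γ - 1) * T) := by positivity
  have hu2 : u ^ 2 = v ^ 2 := by rw [hv]; ring
  have key : ∀ φ ψ ζ : ℝ,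
      (|u| / 2) * R * T * φ ^ 2 - R * T * (φ * ψ)
          + ((m * u ^ 2 - 1) / (2 * |u|)) * ψ ^ 2
          + (R * |u| / (2 * (γ - 1) * T)) * ζ ^ 2 - R * (ζ * ψ)
      = (v * R * T / 2) * (φ - ψ / v) ^ 2
        + (R * v / (2 * (γ - 1) * T)) * (ζ - (γ - 1) * T * ψ / v) ^ 2
        + ((m * u ^ 2 - 1 - γ * R * T) / (2 * v)) * ψ ^ 2 := by
    intro φ ψ ζ
    rw [habs, hu2]
    field_simp
    ring
  have hd : 0 ≤ (m * u ^ 2 - 1 - γ * R * T) / (2 * v) := by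
    apply div_nonneg (by linarith) (by linarith)
  constructor
  · intro φ ψ ζ
    rw [key]
    have h1 : 0 ≤ (v * R * T / 2) * (φ - ψ / v) ^ 2 := by positivity
    have h2 : 0 ≤ (R * v / (2 * (γ - 1) * T)) * (ζ - (γ - 1) * T * ψ / v) ^ 2 := by positivity
    have h3 : 0 ≤ ((m * u ^ 2 - 1 - γ * R * T) / (2 * v)) * ψ ^ 2 :=
      mul_nonneg hd (sq_nonneg _)
    linarith
  · intro hstrict φ ψ ζ hne
    rw [key]
    have hd' : 0 < (m * u ^ 2 - 1 - γ * R * T) / (2 * v) := by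
      apply div_pos (by linarith) (by linarith)
    have h1 : 0 ≤ (v * R * T / 2) * (φ - ψ / v) ^ 2 := by positivity
    have h2 : 0 ≤ (R * v / (2 * (γ - 1) * T)) * (ζ - (γ - 1) * T * ψ / v) ^ 2 := by positivity
    by_cases hψ : ψ = 0
    · subst hψ
      by_cases hφ : φ = 0
      · subst hφ
        have hζ : ζ ≠ 0 := by tauto
        have : 0 < (R * v / (2 * (γ - 1) * T)) * (ζ - (γ - 1) * T * 0 / v) ^ 2 := by
          have : ζ - (γ - 1) * T * 0 / v = ζ := by ring
          rw [this]
          positivity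
        have h3 : 0 ≤ ((m * u ^ 2 - 1 - γ * R * T) / (2 * v)) * (0:ℝ) ^ 2 := by positivity
        linarith
      · have : 0 < (v * R * T / 2) * (φ - 0 / v) ^ 2 := by
          have h0 : φ - 0 / v = φ := by ring
          rw [h0]; positivity
        have h3 : 0 ≤ ((m * u ^ 2 - 1 - γ * R * T) / (2 * v)) * (0:ℝ) ^ 2 := by positivity
        linarith
    · have : 0 < ((m * u ^ 2 - 1 - γ * R * T) / (2 * v)) * ψ ^ 2 := by positivity
      linarith
end
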